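/- For n ≥ 2, define Z(q,T1,T2) = [ (1 − q^{C(n,2)} T1^n T2)(1 − q^{C(n,2)+2} T1^{2n−1} T2) + q^{C(n+1,2)} T1^n T2 (1 − q^{−n+1})(1 − q^{−(n−1)} T1^{n−1}) ] / [ (1 − q^{C(n+1,2)} T2)(1 − q^{C(n+1,2)+1} T1^n T2)(1 − q^{C(n+1,2)+1} T1^{2n−1} T2) ]. Then substituting q → q^{−1}, T1 → T1^{−1}, T2 → T2^{−1} transforms Z into −q^{C(n+1,2)+2n} T2 · Z(q,T1,T2). -/

import Mathlib

/-!
Inverting the variables multiplies each factor `1 - m` by the unit `-m⁻¹`, since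
`1 - m⁻¹ = -m⁻¹ * (1 - m)`. Hence the denominator of `Z` picks up
`-(q^(3·C(n+1,2)+2) T₁^(3n-1) T₂³)⁻¹`, while each of the two summands of the numerator is
palindromic of the same multidegree and picks up `(q^(2·C(n,2)+2) T₁^(3n-1) T₂²)⁻¹`.
The quotient of these factors is `-q^(C(n+1,2)+2n) T₂`, as `C(n+1,2) = C(n,2) + n`.
-/

noncomputable section

/- The field ℚ(q, T₁, T₂) of rational functions in three variables. -/
abbrev Kfun : Type := FractionRing (MvPolynomial (Fin 3) ℚ)

def qv : Kfun := algebraMap (MvPolynomial (Fin 3) ℚ) Kfun (MvPolynomial.X 0)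
def t1v : Kfun := algebraMap (MvPolynomial (Fin 3) ℚ) Kfun (MvPolynomial.X 1)
def t2v : Kfun := algebraMap (MvPolynomial (Fin 3) ℚ) Kfun (MvPolynomial.X 2)

/- Local bivariate conjugacy class zeta function of H_n (n ≥ 2). -/
def Zh (n : ℕ) (x u1 u2 : Kfun) : Kfun :=
  ((1 - x ^ (n.choose 2) * u1 ^ n * u2) *
        (1 - x ^ (n.choose 2 + 2) * u1 ^ (2 * n - 1) * u2) +
      x ^ ((n + 1).choose 2) * u1 ^ n * u2 * (1 - x ^ (-(n : ℤ) + 1)) *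
        (1 - x ^ (-((n : ℤ) - 1)) * u1 ^ (n - 1))) /
    ((1 - x ^ ((n + 1).choose 2) * u2) *
      (1 - x ^ ((n + 1).choose 2 + 1) * u1 ^ n * u2) *
      (1 - x ^ ((n + 1).choose 2 + 1) * u1 ^ (2 * n - 1) * u2))

theorem add_one_choose_two (n : ℕ) : (n + 1).choose 2 = n.choose 2 + n := by
  rw [Nat.choose_succ_succ', Nat.choose_one_right, add_comm]

section

variable {K : Type*} [Field K]

def zhNum (n : ℕ) (x u1 u2 : K) : K :=
  (1 - x ^ (n.choose 2) * u1 ^ n * u2) * (1 - x ^ (n.choose 2 + 2) * u1 ^ (2 * n - 1) * u2) +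
    x ^ ((n + 1).choose 2) * u1 ^ n * u2 * (1 - x ^ (-(n : ℤ) + 1)) *
      (1 - x ^ (-((n : ℤ) - 1)) * u1 ^ (n - 1))

def zhDen (n : ℕ) (x u1 u2 : K) : K :=
  (1 - x ^ ((n + 1).choose 2) * u2) * (1 - x ^ ((n + 1).choose 2 + 1) * u1 ^ n * u2) *
    (1 - x ^ ((n + 1).choose 2 + 1) * u1 ^ (2 * n - 1) * u2)

theorem Zh_eq_zhNum_div_zhDen (n : ℕ) (x u1 u2 : Kfun) :
    Zh n x u1 u2 = zhNum n x u1 u2 / zhDen n x u1 u2 := rfl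

variable {x u1 u2 : K}

theorem zhNum_inv {n : ℕ} (hn : 1 ≤ n) (hx : x ≠ 0) (h1 : u1 ≠ 0) (h2 : u2 ≠ 0) :
    zhNum n x⁻¹ u1⁻¹ u2⁻¹ =
      (x ^ (2 * n.choose 2 + 2) * u1 ^ (n + (2 * n - 1)) * u2 ^ 2)⁻¹ * zhNum n x u1 u2 := by
  obtain ⟨k, rfl⟩ := Nat.exists_eq_add_of_le' hn
  have hz : -((k + 1 : ℕ) : ℤ) + 1 = -(k : ℤ) := by push_cast; ring
  have hz' : -(((k + 1 : ℕ) : ℤ) - 1) = -(k : ℤ) := by push_cast; ring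
  simp only [zhNum, add_one_choose_two (k + 1), hz, hz', zpow_neg, zpow_natCast, inv_inv,
    inv_pow, show 2 * (k + 1) - 1 = 2 * k + 1 by omega, Nat.add_sub_cancel]
  field_simp
  ring

theorem zhDen_inv (n : ℕ) (hx : x ≠ 0) (h1 : u1 ≠ 0) (h2 : u2 ≠ 0) :
    zhDen n x⁻¹ u1⁻¹ u2⁻¹ =
      -(x ^ (3 * (n + 1).choose 2 + 2) * u1 ^ (n + (2 * n - 1)) * u2 ^ 3)⁻¹ * zhDen n x u1 u2 := by
  simp only [zhDen, inv_pow]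
  field_simp
  ring

theorem zhNum_div_zhDen_inv {n : ℕ} (hn : 1 ≤ n) (hx : x ≠ 0) (h1 : u1 ≠ 0) (h2 : u2 ≠ 0) :
    zhNum n x⁻¹ u1⁻¹ u2⁻¹ / zhDen n x⁻¹ u1⁻¹ u2⁻¹ =
      -x ^ ((n + 1).choose 2 + 2 * n) * u2 * (zhNum n x u1 u2 / zhDen n x u1 u2) := by
  rw [zhNum_inv hn hx h1 h2, zhDen_inv n hx h1 h2, mul_div_mul_comm, add_one_choose_two]
  congr 1
  field_simp
  ring

end

theorem Zh_inv {n : ℕ} (hn : 1 ≤ n) {x u1 u2 : Kfun} (hx : x ≠ 0) (h1 : u1 ≠ 0) (h2 : u2 ≠ 0) :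
    Zh n x⁻¹ u1⁻¹ u2⁻¹ = -x ^ ((n + 1).choose 2 + 2 * n) * u2 * Zh n x u1 u2 := by
  rw [Zh_eq_zhNum_div_zhDen, Zh_eq_zhNum_div_zhDen]
  exact zhNum_div_zhDen_inv hn hx h1 h2

theorem algebraMap_X_ne_zero (i : Fin 3) :
    algebraMap (MvPolynomial (Fin 3) ℚ) Kfun (MvPolynomial.X i) ≠ 0 :=
  (map_ne_zero_iff _ (IsFractionRing.injective _ _)).mpr (MvPolynomial.X_ne_zero i)

theorem stmt18 (n : ℕ) (hn : 2 ≤ n) :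
    Zh n qv⁻¹ t1v⁻¹ t2v⁻¹ = -qv ^ ((n + 1).choose 2 + 2 * n) * t2v * Zh n qv t1v t2v :=
  Zh_inv (by omega) (algebraMap_X_ne_zero 0) (algebraMap_X_ne_zero 1) (algebraMap_X_ne_zero 2)
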